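/- Let X and Y be real Banach spaces, p ≥ 1, and let L : X → Y be a continuous linear operator that does not lie in the operator-norm closure of the finite-rank continuous linear operators from X to Y; set δ := dist(L, {finite-rank operators from X to Y}) > 0. Let μ^0 be a nonzero finite Borel measure on X with ∫_X ‖x‖^p dμ^0(x) < ∞, and let F(x) := L x. Then for every cylindrical map G = D ∘ f ∘ E with f : ℝ^N → ℝ^{N'} continuously differentiable, ∫_X ‖DF(x) − DG(x)‖_{L(X,Y)}^p dμ^0(x) ≥ δ^p · μ^0(X). Consequently such cylindrical maps are not dense with respect to the operator-norm Sobolev norm ‖·‖_{W^{1,p}_{μ^0}}, even among maps F of class C^1 whose derivative grows at most linearly. -/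

import Mathlib

open MeasureTheory
open scoped Topology ENNReal NNReal

/-- A continuous linear operator has finite rank if its range is finite-dimensional. -/
def FiniteRankOp {X Y : Type*} [NormedAddCommGroup X] [NormedSpace ℝ X]
    [NormedAddCommGroup Y] [NormedSpace ℝ Y] (T : X →L[ℝ] Y) : Prop :=
  FiniteDimensional ℝ (LinearMap.range (T : X →ₗ[ℝ] Y))

/-! Every derivative of a cylindrical map `D ∘ f ∘ E` factors through the finite-dimensional
domain of `D`, so it has finite rank and hence lies at operator-norm distance at least `δ`
from `L`; integrating the pointwise bound `δ ^ p ≤ ‖L - DG(x)‖ ^ p` gives the claim. -/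

section FiniteRank

variable {X V Y : Type*} [NormedAddCommGroup X] [NormedSpace ℝ X]
  [NormedAddCommGroup V] [NormedSpace ℝ V] [NormedAddCommGroup Y] [NormedSpace ℝ Y]

theorem finiteRankOp_of_finiteDimensional [FiniteDimensional ℝ V] (T : V →L[ℝ] Y) :
    FiniteRankOp T :=
  LinearMap.finiteDimensional_range _

theorem FiniteRankOp.comp {T : V →L[ℝ] Y} (hT : FiniteRankOp T) (A : X →L[ℝ] V) :
    FiniteRankOp (T.comp A) :=
  haveI : FiniteDimensional ℝ (LinearMap.range (T : V →ₗ[ℝ] Y)) := hT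
  Submodule.finiteDimensional_of_le (LinearMap.range_comp_le_range (A : X →ₗ[ℝ] V) _)

theorem infDist_finiteRankOp_le_norm_sub (L : X →L[ℝ] Y) {T : X →L[ℝ] Y}
    (hT : FiniteRankOp T) :
    Metric.infDist L {T : X →L[ℝ] Y | FiniteRankOp T} ≤ ‖L - T‖ := by
  rw [← dist_eq_norm]
  exact Metric.infDist_le_dist_of_mem hT

end FiniteRank

section Cylindrical

variable {X V W Y : Type*} [NormedAddCommGroup X] [NormedSpace ℝ X]
  [NormedAddCommGroup V] [NormedSpace ℝ V] [NormedAddCommGroup W] [NormedSpace ℝ W]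
  [NormedAddCommGroup Y] [NormedSpace ℝ Y]

theorem fderiv_cylindrical {E : X →L[ℝ] V} {f : V → W} (D : W →L[ℝ] Y) {x : X}
    (hf : DifferentiableAt ℝ f (E x)) :
    fderiv ℝ (fun y => D (f (E y))) x = D.comp ((fderiv ℝ f (E x)).comp E) :=
  (D.hasFDerivAt.comp x (hf.hasFDerivAt.comp x E.hasFDerivAt)).fderiv

theorem finiteRankOp_fderiv_cylindrical [FiniteDimensional ℝ W] (E : X →L[ℝ] V) {f : V → W}
    (D : W →L[ℝ] Y) {x : X} (hf : DifferentiableAt ℝ f (E x)) :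
    FiniteRankOp (fderiv ℝ (fun y => D (f (E y))) x) := by
  rw [fderiv_cylindrical D hf]
  exact (finiteRankOp_of_finiteDimensional D).comp _

end Cylindrical

theorem stmt_1_general {X Y : Type*} [NormedAddCommGroup X] [NormedSpace ℝ X]
    [NormedAddCommGroup Y] [NormedSpace ℝ Y]
    [MeasurableSpace X]
    (p : ℝ) (hp : 1 ≤ p)
    (L : X →L[ℝ] Y)
    (δ : ℝ) (hδ : δ = Metric.infDist L {T : X →L[ℝ] Y | FiniteRankOp T})
    (μ0 : Measure X) :
    ∀ (N N' : ℕ) (E : X →L[ℝ] (Fin N → ℝ)) (f : (Fin N → ℝ) → (Fin N' → ℝ))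
      (D : (Fin N' → ℝ) →L[ℝ] Y), ContDiff ℝ 1 f →
      ENNReal.ofReal (δ ^ p) * μ0 Set.univ ≤
        ∫⁻ x,
          (‖fderiv ℝ (fun y : X => L y) x - fderiv ℝ (fun y : X => D (f (E y))) x‖₊ :
            ℝ≥0∞) ^ p ∂μ0 := by
  intro N N' E f D hf
  have hp0 : 0 ≤ p := zero_le_one.trans hp
  have hδ0 : 0 ≤ δ := hδ ▸ Metric.infDist_nonneg
  rw [← lintegral_const]
  refine lintegral_mono fun x => ?_
  have hfx : DifferentiableAt ℝ f (E x) := hf.differentiable one_ne_zero (E x)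
  have hdist : δ ≤ ‖L - fderiv ℝ (fun y => D (f (E y))) x‖ :=
    hδ ▸ infDist_finiteRankOp_le_norm_sub L (finiteRankOp_fderiv_cylindrical E D hfx)
  rw [L.fderiv, ← enorm_eq_nnnorm, ← ofReal_norm,
    ENNReal.ofReal_rpow_of_nonneg (norm_nonneg _) hp0]
  exact ENNReal.ofReal_le_ofReal (Real.rpow_le_rpow hδ0 hdist hp0)

/-- if `L` lies outside the operator-norm closure of the finite-rank operators,
`δ` is the distance from `L` to the finite-rank operators, `μ0` is a nonzero finite Borel
measure on `X` with finite `p`-th moment, and `F(x) := L x`, then for every cylindrical map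
`G = D ∘ f ∘ E` with `f` continuously differentiable,
`∫_X ‖DF(x) − DG(x)‖^p dμ0 ≥ δ^p · μ0(X)`. -/
theorem stmt_1 {X Y : Type*} [NormedAddCommGroup X] [NormedSpace ℝ X] [CompleteSpace X]
    [NormedAddCommGroup Y] [NormedSpace ℝ Y] [CompleteSpace Y]
    [MeasurableSpace X] [BorelSpace X]
    (p : ℝ) (hp : 1 ≤ p)
    (L : X →L[ℝ] Y)
    (hL : L ∉ closure {T : X →L[ℝ] Y | FiniteRankOp T})
    (δ : ℝ) (hδ : δ = Metric.infDist L {T : X →L[ℝ] Y | FiniteRankOp T})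
    (μ0 : Measure X) [IsFiniteMeasure μ0] (hμ0 : μ0 ≠ 0)
    (hmom : ∫⁻ x, (‖x‖₊ : ℝ≥0∞) ^ p ∂μ0 < ⊤) :
    ∀ (N N' : ℕ) (E : X →L[ℝ] (Fin N → ℝ)) (f : (Fin N → ℝ) → (Fin N' → ℝ))
      (D : (Fin N' → ℝ) →L[ℝ] Y), ContDiff ℝ 1 f →
      ENNReal.ofReal (δ ^ p) * μ0 Set.univ ≤
        ∫⁻ x,
          (‖fderiv ℝ (fun y : X => L y) x - fderiv ℝ (fun y : X => D (f (E y))) x‖₊ :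
            ℝ≥0∞) ^ p ∂μ0 :=
  stmt_1_general p hp L δ hδ μ0
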